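/- arXiv:2506.18142 — 2 statements merged into one kernel-verified Lean document; each statement's English description precedes it below -/
import Mathlib

section
/- Let C₀ = {∑_{j=1}^∞ 4^{-j} ε_j : ε_j ∈ {0,3}} be the self-similar Cantor set of base-4 expansions with digits 0 and 3. Then the Minkowski sum C₀ + (-1/2)·C₀ = {x - y/2 : x, y ∈ C₀} equals the interval [-1/2, 1]. -/
open Set Pointwise

/-- The base-4 Cantor set with digits `{0,3}`. -/
noncomputable def Cantor4 : Set ℝ :=
  {x | ∃ ε : ℕ → ℝ, (∀ j, ε j = 0 ∨ ε j = 3) ∧ x = ∑' j : ℕ, ε j / 4 ^ (j + 1)}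

/-!
Digitwise, `ε - δ/2` with `ε, δ ∈ {0, 3}` ranges exactly over `{-3/2, 0, 3/2, 3} = (3/2) • {-1, 0, 1, 2}`.
Hence `C₀ - C₀/2` is `3/2` times the set of base-4 expansions with digits `{-1, 0, 1, 2}`,
which is `[0, 1] - 1/3` since every number in `[0, 1]` has a base-4 expansion.
-/

namespace Real

theorem ofDigits_eq_tsum {b : ℕ} (d : ℕ → Fin b) :
    ofDigits d = ∑' j, ((d j : ℕ) : ℝ) / b ^ (j + 1) := by
  simp only [ofDigits, ofDigitsTerm, div_eq_mul_inv]

theorem ofDigits_add_mul_eq {b : ℕ} (d₁ d₂ d₃ d₄ : ℕ → Fin b) (s t u : ℝ)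
    (h : ∀ j, ((d₁ j : ℕ) : ℝ) + s * (d₂ j : ℕ) = t * (d₃ j : ℕ) + u * (d₄ j : ℕ)) :
    ofDigits d₁ + s * ofDigits d₂ = t * ofDigits d₃ + u * ofDigits d₄ := by
  have hasSum (d : ℕ → Fin b) : HasSum (ofDigitsTerm d) (ofDigits d) :=
    summable_ofDigitsTerm.hasSum
  have termwise (j : ℕ) : ofDigitsTerm d₁ j + s * ofDigitsTerm d₂ j
      = t * ofDigitsTerm d₃ j + u * ofDigitsTerm d₄ j := by
    simp only [ofDigitsTerm]
    linear_combination ((b : ℝ) ^ (j + 1))⁻¹ * h j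
  have lhs := (hasSum d₁).add ((hasSum d₂).mul_left s)
  simp only [termwise] at lhs
  exact lhs.unique (((hasSum d₃).mul_left t).add ((hasSum d₄).mul_left u))

end Real

open Real

theorem cantor4_eq_image_ofDigits :
    Cantor4 = ofDigits '' {e : ℕ → Fin 4 | ∀ j, e j = 0 ∨ e j = 3} := by
  ext x
  simp only [Cantor4, mem_ofPred_eq, mem_image, ofDigits_eq_tsum, Nat.cast_ofNat]
  constructor
  · rintro ⟨ε, hε, rfl⟩
    refine ⟨fun j => if ε j = 0 then 0 else 3, fun j => by dsimp only; split_ifs <;> simp, ?_⟩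
    refine tsum_congr fun j => ?_
    rcases hε j with h | h <;> simp [h]
  · rintro ⟨e, he, rfl⟩
    exact ⟨fun j => ((e j : ℕ) : ℝ), fun j => by rcases he j with h | h <;> simp [h], rfl⟩

-- A base-4 digit `k` splits as `hi k - lo k / 2 = (3/2) (k - 1)` with `hi k, lo k ∈ {0, 3}`.
def hiDigit : Fin 4 → Fin 4 := ![0, 0, 3, 3]

def loDigit : Fin 4 → Fin 4 := ![3, 0, 3, 0]

theorem hiDigit_mem (k : Fin 4) : hiDigit k = 0 ∨ hiDigit k = 3 := by
  fin_cases k <;> decide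

theorem loDigit_mem (k : Fin 4) : loDigit k = 0 ∨ loDigit k = 3 := by
  fin_cases k <;> decide

theorem hiDigit_sub_half_loDigit (k : Fin 4) :
    ((hiDigit k : ℕ) : ℝ) + -(1 / 2) * (loDigit k : ℕ)
      = 3 / 2 * (k : ℕ) + -(1 / 2) * (Fin.last 3 : ℕ) := by
  fin_cases k <;> norm_num [hiDigit, loDigit]

theorem cantor4_add_neg_half_smul :
    Cantor4 + (-(1/2) : ℝ) • Cantor4 = Set.Icc (-(1/2) : ℝ) 1 := by
  rw [cantor4_eq_image_ofDigits]
  apply Subset.antisymm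
  · rintro _ ⟨_, ⟨e, -, rfl⟩, _, ⟨_, ⟨e', -, rfl⟩, rfl⟩, rfl⟩
    have := ofDigits_nonneg e
    have := ofDigits_le_one e
    have := ofDigits_nonneg e'
    have := ofDigits_le_one e'
    change ofDigits e + -(1 / 2) * ofDigits e' ∈ _
    constructor <;> linarith
  · rintro z ⟨hz₀, hz₁⟩
    obtain ⟨d, -, hd⟩ := ofDigits_SurjOn (b := 4) (by norm_num)
      (show (2 * z + 1) / 3 ∈ Icc (0 : ℝ) 1 by constructor <;> linarith)
    refine ⟨_, ⟨fun j => hiDigit (d j), fun j => hiDigit_mem _, rfl⟩, _,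
      smul_mem_smul_set ⟨fun j => loDigit (d j), fun j => loDigit_mem _, rfl⟩, ?_⟩
    change ofDigits (fun j => hiDigit (d j)) + -(1 / 2) * ofDigits (fun j => loDigit (d j)) = z
    -- the constant `-3/2` per digit sums to `-(1/2) * 0.333…₄ = -1/2`
    rw [ofDigits_add_mul_eq _ _ d (fun _ => Fin.last 3) _ _ _
      (fun j => hiDigit_sub_half_loDigit (d j)), hd, ofDigits_const_last_eq_one]
    ring
end

section
/- Let (N_k) and (M_k) be sequences of positive integers with N_k ≥ 2 and 1 < M_k < N_k^d, and let C ⊂ [0,1]^d be a fractal cube set: C = ⋂_k C_k, where C₀ = [0,1]^d and C_{k+1} is obtained by subdividing each cube of C_k into N_{k+1}^d congruent subcubes and keeping M_{k+1} of them. Then the packing dimension of C is at least limsup_{k→∞} log(M₁⋯M_k)/log(N₁⋯N_k). -/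
/-!
By the Baire category theorem, some member `t` of any countable cover of the compact set `C`
has a closure containing `C ∩ Q` for a cube `Q` of some generation `j`. For every `k`, `Q`
contains `M_{j+1} ⋯ M_{j+k}` cubes of generation `j + k`, each meeting `C`, while a ball of radius
half their side length meets at most `2 ^ d` of them. Hence covering `t` by balls of a quarter of
that side length takes at least `M_{j+1} ⋯ M_{j+k} / 2 ^ d` balls, which gives the lower bound for
the upper box dimension of `t` as `k → ∞`.
-/

open Set MeasureTheory Filter ENNReal

/-- Covering number of `s` by balls of radius `r` (`∞` if no finite cover exists). -/
noncomputable def coverNum {α : Type*} [PseudoMetricSpace α] (s : Set α) (r : ℝ) : ℝ≥0∞ :=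
  sInf ((fun t : Finset α => (t.card : ℝ≥0∞)) '' {t | s ⊆ ⋃ x ∈ t, Metric.ball x r})

/-- Upper box (Minkowski) dimension. -/
noncomputable def upperBoxDim {α : Type*} [PseudoMetricSpace α] (s : Set α) : ℝ≥0∞ :=
  Filter.limsup
    (fun r : ℝ =>
      if coverNum s r = ⊤ then (⊤ : ℝ≥0∞)
      else ENNReal.ofReal (Real.log (coverNum s r).toReal / (-Real.log r)))
    (nhdsWithin 0 (Set.Ioi 0))

/-- Packing dimension, via the modified upper box dimension characterization. -/
noncomputable def packingDim {α : Type*} [PseudoMetricSpace α] (s : Set α) : ℝ≥0∞ :=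
  ⨅ (c : ℕ → Set α) (_ : s ⊆ ⋃ n, c n), ⨆ n, upperBoxDim (c n)

/-- The closed axis-parallel cube of side length `side` with lower corner `side • z`. -/
def fcCube (d : ℕ) (side : ℝ) (z : Fin d → ℕ) : Set (Fin d → ℝ) :=
  Set.pi Set.univ fun i => Set.Icc ((z i : ℝ) * side) (((z i : ℝ) + 1) * side)

open Topology

section Dimension

variable {α : Type*} [PseudoMetricSpace α]

lemma ofReal_le_coverNum {s : Set α} {r : ℝ} {n m : ℕ} (hm : 0 < m)
    (h : ∀ t : Finset α, s ⊆ ⋃ x ∈ t, Metric.ball x r → n ≤ t.card * m) :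
    ENNReal.ofReal ((n : ℝ) / m) ≤ coverNum s r := by
  refine le_sInf ?_
  rintro _ ⟨t, ht, rfl⟩
  rw [ENNReal.ofReal_div_of_pos (by positivity), ofReal_natCast, ofReal_natCast,
    ENNReal.div_le_iff (by positivity) (natCast_ne_top m)]
  simpa using (Nat.cast_le (α := ℝ≥0∞)).2 (h t ht)

theorem limsup_le_upperBoxDim {s : Set α} {r a : ℕ → ℝ}
    (hr : Tendsto r atTop (𝓝[>] 0)) (ha : ∀ k, 0 < a k)
    (hcov : ∀ k, ENNReal.ofReal (a k) ≤ coverNum s (r k)) :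
    limsup (fun k => ENNReal.ofReal (Real.log (a k) / -Real.log (r k))) atTop
      ≤ upperBoxDim s := by
  refine (limsup_le_limsup ?_).trans (limsup_le_limsup_of_le hr)
  filter_upwards [(hr.mono_right nhdsWithin_le_nhds).eventually_lt_const one_pos,
    hr.eventually self_mem_nhdsWithin] with k hr1 (hr0 : 0 < r k)
  have hlog : 0 < -Real.log (r k) := neg_pos.2 (Real.log_neg hr0 hr1)
  show _ ≤ ite _ _ _
  split_ifs with htop
  · exact le_top
  · gcongr
    · exact ha k
    rw [← ENNReal.ofReal_le_iff_le_toReal htop]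
    exact hcov k

lemma closure_subset_iUnion_ball {t : Set α} {T : Finset α}
    {r r' : ℝ} (ht : t ⊆ ⋃ x ∈ T, Metric.ball x r) (hr : r < r') :
    closure t ⊆ ⋃ x ∈ T, Metric.ball x r' :=
  (closure_minimal (ht.trans (iUnion₂_mono fun _ _ => Metric.ball_subset_closedBall))
      (T.finite_toSet.isClosed_biUnion fun _ _ => Metric.isClosed_closedBall)).trans
    (iUnion₂_mono fun _ _ => Metric.closedBall_subset_ball hr)

theorem le_packingDim_of_forall_isOpen {s : Set α} (hs : IsComplete s) (hne : s.Nonempty)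
    {D : ℝ≥0∞}
    (h : ∀ U : Set α, IsOpen U → (s ∩ U).Nonempty →
      ∀ t, s ∩ U ⊆ closure t → D ≤ upperBoxDim t) :
    D ≤ packingDim s := by
  refine le_iInf₂ fun c hc => ?_
  have : Nonempty s := hne.to_subtype
  have : CompleteSpace s := hs.completeSpace_coe
  obtain ⟨n, x, hx⟩ := nonempty_interior_of_iUnion_of_closed
    (f := fun n => ((↑) : s → α) ⁻¹' closure (c n))
    (fun n => isClosed_closure.preimage continuous_subtype_val)
    (iUnion_eq_univ_iff.2 fun x => (mem_iUnion.1 (hc x.2)).imp fun _ hx => subset_closure hx)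
  obtain ⟨U, hU, hUs⟩ :=
    isOpen_induced_iff.1 (isOpen_interior (s := ((↑) : s → α) ⁻¹' closure (c n)))
  refine (h U hU ⟨x, x.2, (hUs ▸ hx :)⟩ (c n) fun y ⟨hys, hyU⟩ => ?_).trans
    (le_iSup (fun n => upperBoxDim (c n)) n)
  exact interior_subset (s := ((↑) : s → α) ⁻¹' closure (c n))
    (hUs ▸ hyU : (⟨y, hys⟩ : s) ∈ _)

end Dimension

theorem limsup_ofReal_div_le_limsup_ofReal_sub_div_add {L B : ℕ → ℝ} {D : ℝ} (c c' : ℝ)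
    (hB : Tendsto B atTop atTop) (hL : ∀ k, |L k| ≤ D * B k) :
    limsup (fun k => ENNReal.ofReal (L k / B k)) atTop
      ≤ limsup (fun k => ENNReal.ofReal ((L k - c) / (B k + c'))) atTop := by
  set e : ℕ → ℝ := fun k => L k / B k - (L k - c) / (B k + c')
  have hBc' : Tendsto (fun k => B k + c') atTop atTop := tendsto_atTop_add_const_right _ c' hB
  have hbdd : IsBoundedUnder (· ≤ ·) atTop (norm ∘ fun k => L k / B k) := by
    refine isBoundedUnder_of_eventually_le (a := D) ?_
    filter_upwards [hB.eventually_gt_atTop 0] with k hk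
    simpa [abs_div, abs_of_pos hk, div_le_iff₀ hk] using hL k
  -- `e k = (L k / B k) * (c' / (B k + c')) + c / (B k + c')` once `B k > 0`
  have he : Tendsto e atTop (𝓝 0) := by
    have hlim := (isBoundedUnder_le_mul_tendsto_zero hbdd
      ((tendsto_const_nhds (x := c')).div_atTop hBc')).add
      (tendsto_const_nhds.div_atTop hBc' : Tendsto (fun k => c / (B k + c')) atTop (𝓝 0))
    rw [add_zero] at hlim
    refine hlim.congr' ?_
    filter_upwards [hB.eventually_gt_atTop 0, hBc'.eventually_gt_atTop 0] with k hk hk'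
    simp only [e]
    field_simp
    ring
  calc limsup (fun k => ENNReal.ofReal (L k / B k)) atTop
      ≤ limsup ((fun k => ENNReal.ofReal ((L k - c) / (B k + c')))
          + fun k => ENNReal.ofReal (e k)) atTop :=
        limsup_le_limsup (Eventually.of_forall fun k => by
          simpa [e] using ENNReal.ofReal_add_le (p := (L k - c) / (B k + c')) (q := e k))
    _ = _ := ENNReal.limsup_add_of_right_tendsto_zero (by
          simpa using (ENNReal.tendsto_ofReal he)) _

lemma eq_floor_or_eq_floor_add_one_of_abs_sub_lt {m : ℤ} {s a p : ℝ} (hs : 0 < s)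
    (h₁ : m * s ≤ p) (h₂ : p ≤ (m + 1) * s) (h : |p - a| < s / 2) :
    m = ⌊(a - s / 2) / s⌋ ∨ m = ⌊(a - s / 2) / s⌋ + 1 := by
  obtain ⟨ha₁, ha₂⟩ := abs_sub_lt_iff.1 h
  have hlow : ⌊(a - s / 2) / s⌋ ≤ m :=
    Int.floor_le_iff.2 ((div_lt_iff₀ hs).2 (by linarith))
  have hupp : m - 1 ≤ ⌊(a - s / 2) / s⌋ :=
    Int.le_floor.2 ((le_div_iff₀ hs).2 (by push_cast; linarith))
  omega

/-- The `2 ^ d` lattice points `z` whose cube `fcCube d s z` can meet `Metric.ball x (s / 2)`. -/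
noncomputable def gridCorner {d : ℕ} (s : ℝ) (x : Fin d → ℝ) (b : Fin d → Bool) : Fin d → ℕ :=
  fun i => (⌊(x i - s / 2) / s⌋ + if b i then 1 else 0).toNat

lemma exists_gridCorner_eq {d : ℕ} {s : ℝ} (hs : 0 < s) {x : Fin d → ℝ} {z : Fin d → ℕ}
    (h : (fcCube d s z ∩ Metric.ball x (s / 2)).Nonempty) :
    ∃ b, gridCorner s x b = z := by
  obtain ⟨p, hpz, hpx⟩ := h
  refine ⟨fun i => decide ((z i : ℤ) = ⌊(x i - s / 2) / s⌋ + 1), funext fun i => ?_⟩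
  have hi := eq_floor_or_eq_floor_add_one_of_abs_sub_lt (m := z i) hs
    (mod_cast (hpz i trivial).1) (mod_cast (hpz i trivial).2)
    (by simpa [Real.dist_eq] using (dist_pi_lt_iff (by positivity)).1 hpx i)
  simp only [gridCorner]
  rcases hi with hi | hi <;> simp [← hi]

lemma card_le_card_mul_two_pow_of_fcCube_meets_ball {d : ℕ} {s : ℝ} (hs : 0 < s)
    {Z : Finset (Fin d → ℕ)} {T : Finset (Fin d → ℝ)}
    (h : ∀ z ∈ Z, ∃ x ∈ T, (fcCube d s z ∩ Metric.ball x (s / 2)).Nonempty) :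
    Z.card ≤ T.card * 2 ^ d := by
  classical
  have hZ : Z ⊆ T.biUnion fun x => Finset.univ.image (gridCorner s x) := by
    intro z hz
    obtain ⟨x, hxT, hx⟩ := h z hz
    obtain ⟨b, rfl⟩ := exists_gridCorner_eq hs hx
    exact Finset.mem_biUnion.2 ⟨x, hxT, Finset.mem_image_of_mem _ (Finset.mem_univ b)⟩
  calc Z.card ≤ _ := Finset.card_le_card hZ
    _ ≤ ∑ x ∈ T, (Finset.univ.image (gridCorner s x)).card := Finset.card_biUnion_le
    _ ≤ ∑ _x ∈ T, 2 ^ d := Finset.sum_le_sum fun x _ =>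
        Finset.card_image_le.trans (by simp)
    _ = T.card * 2 ^ d := by rw [Finset.sum_const, smul_eq_mul]

section FractalCube

variable {d : ℕ} {N M : ℕ → ℕ} {S : ℕ → Finset (Fin d → ℕ)}

/-- `fcCube d s z` is one of the `n ^ d` subcubes into which `fcCube d (n * s) w` splits. -/
abbrev IsChild (n : ℕ) (w z : Fin d → ℕ) : Prop :=
  ∀ i, n * w i ≤ z i ∧ z i < n * (w i + 1)

lemma IsChild.eq {n : ℕ} {w w' z : Fin d → ℕ} (h : IsChild n w z) (h' : IsChild n w' z) :
    w = w' := by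
  funext i
  have hw : z i / n = w i := Nat.div_eq_of_lt_le (by linarith [(h i).1]) (by linarith [(h i).2])
  have hw' : z i / n = w' i :=
    Nat.div_eq_of_lt_le (by linarith [(h' i).1]) (by linarith [(h' i).2])
  rw [← hw, hw']

lemma fcCube_subset_of_isChild {n : ℕ} {s : ℝ} (hs : 0 ≤ s) {w z : Fin d → ℕ}
    (h : IsChild n w z) : fcCube d s z ⊆ fcCube d (n * s) w := by
  intro p hp i _
  have h₁ : (n : ℝ) * w i ≤ z i := mod_cast (h i).1
  have h₂ : (z i : ℝ) + 1 ≤ n * (w i + 1) := mod_cast (h i).2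
  obtain ⟨hp₁, hp₂⟩ := hp i trivial
  constructor <;> nlinarith

lemma dist_le_of_mem_fcCube {s : ℝ} (hs : 0 ≤ s) {z : Fin d → ℕ} {p q : Fin d → ℝ}
    (hp : p ∈ fcCube d s z) (hq : q ∈ fcCube d s z) : dist p q ≤ s :=
  (dist_pi_le_iff hs).2 fun i =>
    (Real.dist_le_of_mem_Icc (hp i trivial) (hq i trivial)).trans_eq (by ring)

noncomputable def cubeSide (N : ℕ → ℕ) (k : ℕ) : ℝ := (∏ j ∈ Finset.range k, (N j : ℝ))⁻¹

def cubeLevel (N : ℕ → ℕ) (S : ℕ → Finset (Fin d → ℕ)) (k : ℕ) : Set (Fin d → ℝ) :=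
  ⋃ z ∈ S k, fcCube d (cubeSide N k) z

lemma cubeSide_pos (hN : ∀ k, 0 < N k) (k : ℕ) : 0 < cubeSide N k :=
  inv_pos.2 (Finset.prod_pos fun i _ => Nat.cast_pos.2 (hN i))

lemma natCast_mul_cubeSide_succ (hN : ∀ k, 0 < N k) (k : ℕ) :
    N k * cubeSide N (k + 1) = cubeSide N k := by
  have := cubeSide_pos hN k
  have : (N k : ℝ) ≠ 0 := Nat.cast_ne_zero.2 (hN k).ne'
  simp only [cubeSide, Finset.prod_range_succ, mul_inv] at *
  field_simp

lemma tendsto_prod_range_atTop (hN : ∀ k, 2 ≤ N k) :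
    Tendsto (fun k => ∏ i ∈ Finset.range k, (N i : ℝ)) atTop atTop := by
  refine tendsto_atTop_mono (fun k => ?_) (tendsto_pow_atTop_atTop_of_one_lt one_lt_two)
  have := Finset.pow_card_le_prod (Finset.range k) N 2 fun i _ => hN i
  rw [Finset.card_range] at this
  exact_mod_cast this

lemma tendsto_cubeSide_atTop (hN : ∀ k, 2 ≤ N k) : Tendsto (cubeSide N) atTop (𝓝 0) :=
  tendsto_inv_atTop_zero.comp (tendsto_prod_range_atTop hN)

lemma fcCube_subset_cubeLevel (hN : ∀ k, 0 < N k)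
    (hparent : ∀ k, ∀ z ∈ S (k + 1), ∃ w ∈ S k, IsChild (N k) w z) {k m : ℕ} (hmk : m ≤ k)
    {z : Fin d → ℕ} (hz : z ∈ S k) : fcCube d (cubeSide N k) z ⊆ cubeLevel N S m := by
  induction k, hmk using Nat.le_induction generalizing z with
  | base => exact subset_biUnion_of_mem (u := fun z => fcCube d (cubeSide N m) z) hz
  | succ k _ ih =>
    obtain ⟨w, hw, hwz⟩ := hparent k z hz
    refine (fcCube_subset_of_isChild (cubeSide_pos hN _).le hwz).trans ?_
    rw [natCast_mul_cubeSide_succ hN]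
    exact ih hw

/-- The cubes of generation `j + k` lying in the cube `z₀` of generation `j`. -/
def descendants (N : ℕ → ℕ) (S : ℕ → Finset (Fin d → ℕ)) (j : ℕ) (z₀ : Fin d → ℕ) :
    ℕ → Finset (Fin d → ℕ)
  | 0 => {z₀}
  | k + 1 => (descendants N S j z₀ k).biUnion fun w =>
      (S (j + k + 1)).filter (IsChild (N (j + k)) w)

lemma descendants_subset {j : ℕ} {z₀ : Fin d → ℕ} (hz₀ : z₀ ∈ S j) :
    ∀ k, descendants N S j z₀ k ⊆ S (j + k)
  | 0 => by simpa [descendants] using hz₀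
  | k + 1 => Finset.biUnion_subset.2 fun _ _ => Finset.filter_subset _ _

lemma card_descendants
    (hcard : ∀ k, ∀ w ∈ S k, ((S (k + 1)).filter (IsChild (N k) w)).card = M k)
    {j : ℕ} {z₀ : Fin d → ℕ} (hz₀ : z₀ ∈ S j) :
    ∀ k, (descendants N S j z₀ k).card = ∏ i ∈ Finset.range k, M (j + i)
  | 0 => by simp [descendants]
  | k + 1 => by
    rw [descendants, Finset.card_biUnion, Finset.sum_congr rfl
      fun w hw => hcard (j + k) w (descendants_subset hz₀ k hw), Finset.sum_const,
      card_descendants hcard hz₀ k, Finset.prod_range_succ, smul_eq_mul]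
    intro w _ w' _ hne
    refine Finset.disjoint_left.2 fun z hz hz' => hne ?_
    exact (Finset.mem_filter.1 hz).2.eq (Finset.mem_filter.1 hz').2

lemma fcCube_subset_of_mem_descendants (hN : ∀ k, 0 < N k) {j : ℕ} {z₀ : Fin d → ℕ} :
    ∀ {k z}, z ∈ descendants N S j z₀ k →
      fcCube d (cubeSide N (j + k)) z ⊆ fcCube d (cubeSide N j) z₀
  | 0, z, hz => by rw [Finset.mem_singleton.1 hz]; rfl
  | k + 1, z, hz => by
    obtain ⟨w, hw, hwz⟩ := Finset.mem_biUnion.1 hz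
    refine (fcCube_subset_of_isChild (cubeSide_pos hN _).le
      (Finset.mem_filter.1 hwz).2).trans ?_
    rw [← add_assoc, natCast_mul_cubeSide_succ hN]
    exact fcCube_subset_of_mem_descendants hN hw

def limitSet (N : ℕ → ℕ) (S : ℕ → Finset (Fin d → ℕ)) : Set (Fin d → ℝ) :=
  ⋂ k, cubeLevel N S k

lemma isClosed_cubeLevel (k : ℕ) : IsClosed (cubeLevel N S k) :=
  (S k).finite_toSet.isClosed_biUnion fun _ _ => isClosed_set_pi fun _ _ => isClosed_Icc

lemma isClosed_limitSet : IsClosed (limitSet N S) :=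
  isClosed_iInter isClosed_cubeLevel

lemma limitSet_inter_fcCube_nonempty (hN : ∀ k, 0 < N k) (hM : ∀ k, 0 < M k)
    (hcard : ∀ k, ∀ w ∈ S k, ((S (k + 1)).filter (IsChild (N k) w)).card = M k)
    (hparent : ∀ k, ∀ z ∈ S (k + 1), ∃ w ∈ S k, IsChild (N k) w z)
    {k : ℕ} {z : Fin d → ℕ} (hz : z ∈ S k) :
    (limitSet N S ∩ fcCube d (cubeSide N k) z).Nonempty := by
  have hnonempty (m : ℕ) : (cubeLevel N S m ∩ fcCube d (cubeSide N k) z).Nonempty := by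
    obtain ⟨w, hw⟩ : (descendants N S k z m).Nonempty := by
      rw [← Finset.card_pos, card_descendants hcard hz]
      exact Finset.prod_pos fun i _ => hM (k + i)
    obtain ⟨p, hp⟩ : (fcCube d (cubeSide N (k + m)) w).Nonempty :=
      ⟨fun i => w i * cubeSide N (k + m),
        fun i _ => ⟨le_rfl, by nlinarith [cubeSide_pos hN (k + m)]⟩⟩
    exact ⟨p, fcCube_subset_cubeLevel hN hparent (Nat.le_add_left m k)
      (descendants_subset hz m hw) hp, fcCube_subset_of_mem_descendants hN hw hp⟩
  rw [limitSet, iInter_inter]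
  exact IsCompact.nonempty_iInter_of_sequence_nonempty_isCompact_isClosed _
    (fun m => inter_subset_inter_left _ (iUnion₂_subset fun w hw =>
      fcCube_subset_cubeLevel hN hparent m.le_succ hw))
    hnonempty ((isCompact_univ_pi fun _ => isCompact_Icc).inter_left (isClosed_cubeLevel 0))
    fun m => (isClosed_cubeLevel m).inter (isClosed_set_pi fun _ _ => isClosed_Icc)

lemma prod_le_card_mul_two_pow_of_subset_closure (hN : ∀ k, 0 < N k) (hM : ∀ k, 0 < M k)
    (hcard : ∀ k, ∀ w ∈ S k, ((S (k + 1)).filter (IsChild (N k) w)).card = M k)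
    (hparent : ∀ k, ∀ z ∈ S (k + 1), ∃ w ∈ S k, IsChild (N k) w z)
    {j : ℕ} {z₀ : Fin d → ℕ} (hz₀ : z₀ ∈ S j) {t : Set (Fin d → ℝ)}
    (ht : limitSet N S ∩ fcCube d (cubeSide N j) z₀ ⊆ closure t)
    (k : ℕ) {T : Finset (Fin d → ℝ)} (hT : t ⊆ ⋃ x ∈ T, Metric.ball x (cubeSide N (j + k) / 4)) :
    ∏ i ∈ Finset.range k, M (j + i) ≤ T.card * 2 ^ d := by
  have hs := cubeSide_pos hN (j + k)
  have hcl := closure_subset_iUnion_ball hT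
    (by linarith : cubeSide N (j + k) / 4 < cubeSide N (j + k) / 2)
  rw [← card_descendants hcard hz₀ k]
  refine card_le_card_mul_two_pow_of_fcCube_meets_ball hs fun z hz => ?_
  obtain ⟨p, hpC, hpz⟩ :=
    limitSet_inter_fcCube_nonempty hN hM hcard hparent (descendants_subset hz₀ k hz)
  obtain ⟨x, hxT, hpx⟩ :=
    mem_iUnion₂.1 (hcl (ht ⟨hpC, fcCube_subset_of_mem_descendants hN hz hpz⟩))
  exact ⟨x, hxT, p, hpz, hpx⟩

end FractalCube

lemma abs_log_prod_range_le {d : ℕ} {N M : ℕ → ℕ} (hM : ∀ k, 0 < M k)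
    (hMN : ∀ k, M k ≤ N k ^ d) (k : ℕ) :
    |Real.log (∏ i ∈ Finset.range k, (M i : ℝ))|
      ≤ d * Real.log (∏ i ∈ Finset.range k, (N i : ℝ)) := by
  have h₁ : (1 : ℝ) ≤ ∏ i ∈ Finset.range k, (M i : ℝ) :=
    mod_cast Finset.one_le_prod' fun i _ => hM i
  have h₂ : ∏ i ∈ Finset.range k, (M i : ℝ) ≤ (∏ i ∈ Finset.range k, (N i : ℝ)) ^ d := by
    rw [← Finset.prod_pow]
    exact_mod_cast Finset.prod_le_prod' fun i _ => hMN i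
  rw [abs_of_nonneg (Real.log_nonneg h₁), ← Real.log_pow]
  exact Real.log_le_log (by linarith) h₂

theorem limsup_le_upperBoxDim_of_subset_closure {d : ℕ} {N M : ℕ → ℕ}
    {S : ℕ → Finset (Fin d → ℕ)} (hN : ∀ k, 2 ≤ N k) (hM : ∀ k, 0 < M k)
    (hMN : ∀ k, M k ≤ N k ^ d)
    (hcard : ∀ k, ∀ w ∈ S k, ((S (k + 1)).filter (IsChild (N k) w)).card = M k)
    (hparent : ∀ k, ∀ z ∈ S (k + 1), ∃ w ∈ S k, IsChild (N k) w z)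
    {j : ℕ} {z₀ : Fin d → ℕ} (hz₀ : z₀ ∈ S j) {t : Set (Fin d → ℝ)}
    (ht : limitSet N S ∩ fcCube d (cubeSide N j) z₀ ⊆ closure t) :
    limsup (fun k => ENNReal.ofReal (Real.log (∏ i ∈ Finset.range k, (M i : ℝ)) /
      Real.log (∏ i ∈ Finset.range k, (N i : ℝ)))) atTop ≤ upperBoxDim t := by
  have hN₀ (k : ℕ) : 0 < N k := by linarith [hN k]
  set L : ℕ → ℝ := fun k => Real.log (∏ i ∈ Finset.range k, (M i : ℝ))
  set B : ℕ → ℝ := fun k => Real.log (∏ i ∈ Finset.range k, (N i : ℝ))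
  set r : ℕ → ℝ := fun k => cubeSide N (j + k) / 4
  set a : ℕ → ℝ := fun k => ((∏ i ∈ Finset.range k, M (j + i) : ℕ) : ℝ) / (2 ^ d : ℕ)
  have hB : Tendsto B atTop atTop := Real.tendsto_log_atTop.comp (tendsto_prod_range_atTop hN)
  have hr : Tendsto r atTop (𝓝[>] 0) := by
    refine tendsto_nhdsWithin_iff.2 ⟨?_, Eventually.of_forall fun k =>
      div_pos (cubeSide_pos hN₀ _) four_pos⟩
    simpa using ((tendsto_cubeSide_atTop hN).comp (tendsto_atTop_atTop_of_monotone
      (fun _ _ h => Nat.add_le_add_left h j) fun k => ⟨k, Nat.le_add_left k j⟩)).div_const 4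
  have ha (k : ℕ) : 0 < a k :=
    div_pos (mod_cast Finset.prod_pos fun i _ => hM (j + i)) (by positivity)
  have hcov (k : ℕ) : ENNReal.ofReal (a k) ≤ coverNum t (r k) :=
    ofReal_le_coverNum (by positivity) fun _ hT =>
      prod_le_card_mul_two_pow_of_subset_closure hN₀ hM hcard hparent hz₀ ht k hT
  have hlog_a (k : ℕ) : Real.log (a k) = L (k + j) - (L j + d * Real.log 2) := by
    have hpos (m : ℕ) : (0 : ℝ) < M m := mod_cast hM m
    simp only [a, L, add_comm k j, Finset.prod_range_add, Nat.cast_prod, Nat.cast_pow,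
      Nat.cast_ofNat]
    rw [Real.log_div (Finset.prod_pos fun i _ => hpos _).ne' (by positivity), Real.log_pow,
      Real.log_mul (Finset.prod_pos fun i _ => hpos _).ne'
        (Finset.prod_pos fun i _ => hpos _).ne']
    ring
  have hlog_r (k : ℕ) : -Real.log (r k) = B (k + j) + Real.log 4 := by
    rw [Real.log_div (cubeSide_pos hN₀ _).ne' four_ne_zero, cubeSide, Real.log_inv,
      add_comm k j]
    ring
  rw [← limsup_nat_add _ j]
  calc _ ≤ limsup (fun k => ENNReal.ofReal
        ((L (k + j) - (L j + d * Real.log 2)) / (B (k + j) + Real.log 4))) atTop :=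
      limsup_ofReal_div_le_limsup_ofReal_sub_div_add _ _ (hB.comp (tendsto_add_atTop_nat j))
        fun k => abs_log_prod_range_le hM hMN (k + j)
    _ = limsup (fun k => ENNReal.ofReal (Real.log (a k) / -Real.log (r k))) atTop := by
      simp only [hlog_a, hlog_r]
    _ ≤ upperBoxDim t := limsup_le_upperBoxDim hr ha hcov

theorem fractalCube_packingDim_lower_bound_general (d : ℕ) (N M : ℕ → ℕ)
    (hN : ∀ k, 2 ≤ N k) (hM : ∀ k, 1 < M k ∧ M k < N k ^ d)
    (S : ℕ → Finset (Fin d → ℕ))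
    (hS0 : S 0 = {fun _ => 0})
    (hchildcount : ∀ k, ∀ w ∈ S k,
      ((S (k + 1)).filter fun z => ∀ i, N k * w i ≤ z i ∧ z i < N k * (w i + 1)).card = M k)
    (hparent : ∀ k, ∀ z ∈ S (k + 1), ∃ w ∈ S k, ∀ i, N k * w i ≤ z i ∧ z i < N k * (w i + 1))
    (C : Set (Fin d → ℝ))
    (hC : C = ⋂ k, ⋃ z ∈ S k, fcCube d ((∏ j ∈ Finset.range k, (N j : ℝ))⁻¹) z) :
    Filter.limsup
        (fun k => ENNReal.ofReal
          (Real.log (∏ j ∈ Finset.range k, (M j : ℝ)) /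
            Real.log (∏ j ∈ Finset.range k, (N j : ℝ)))) Filter.atTop
      ≤ packingDim C := by
  have hN₀ (k : ℕ) : 0 < N k := by linarith [hN k]
  have hM₀ (k : ℕ) : 0 < M k := by linarith [(hM k).1]
  obtain rfl : C = limitSet N S := hC
  have hne : (limitSet N S).Nonempty :=
    (limitSet_inter_fcCube_nonempty hN₀ hM₀ hchildcount hparent (k := 0) (z := fun _ => 0)
      (by simp [hS0])).mono inter_subset_left
  refine le_packingDim_of_forall_isOpen isClosed_limitSet.isComplete hne ?_
  rintro U hU ⟨x, hxC, hxU⟩ t hUt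
  obtain ⟨ε, hε, hball⟩ := Metric.isOpen_iff.1 hU x hxU
  obtain ⟨j, hj⟩ := ((tendsto_cubeSide_atTop hN).eventually_lt_const hε).exists
  obtain ⟨z₀, hz₀, hxz₀⟩ := mem_iUnion₂.1 (mem_iInter.1 hxC j)
  refine limsup_le_upperBoxDim_of_subset_closure hN hM₀ (fun k => (hM k).2.le) hchildcount
    hparent hz₀ fun y ⟨hyC, hyz₀⟩ => hUt ⟨hyC, hball ?_⟩
  exact (dist_le_of_mem_fcCube (cubeSide_pos hN₀ j).le hyz₀ hxz₀).trans_lt hj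

theorem fractalCube_packingDim_lower_bound (d : ℕ) (hd : 1 ≤ d) (N M : ℕ → ℕ)
    (hN : ∀ k, 2 ≤ N k) (hM : ∀ k, 1 < M k ∧ M k < N k ^ d)
    (S : ℕ → Finset (Fin d → ℕ))
    (hS0 : S 0 = {fun _ => 0})
    (hbound : ∀ k, ∀ z ∈ S k, ∀ i, z i < ∏ j ∈ Finset.range k, N j)
    (hchildcount : ∀ k, ∀ w ∈ S k,
      ((S (k + 1)).filter fun z => ∀ i, N k * w i ≤ z i ∧ z i < N k * (w i + 1)).card = M k)
    (hparent : ∀ k, ∀ z ∈ S (k + 1), ∃ w ∈ S k, ∀ i, N k * w i ≤ z i ∧ z i < N k * (w i + 1))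
    (C : Set (Fin d → ℝ))
    (hC : C = ⋂ k, ⋃ z ∈ S k, fcCube d ((∏ j ∈ Finset.range k, (N j : ℝ))⁻¹) z) :
    Filter.limsup
        (fun k => ENNReal.ofReal
          (Real.log (∏ j ∈ Finset.range k, (M j : ℝ)) /
            Real.log (∏ j ∈ Finset.range k, (N j : ℝ)))) Filter.atTop
      ≤ packingDim C :=
  fractalCube_packingDim_lower_bound_general d N M hN hM S hS0 hchildcount hparent C hC
end
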